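/- Let q : G → circle be a non-degenerate quadratic form on a finite abelian group G. Then |Σ_{g∈G} q(g)|² = |G|; i.e., the Gauss sum Σ_{g∈G} q(g) has absolute value √|G|. -/

import Mathlib

/-!
With `B(g, h) = q g * q h / q (g + h)`, the substitution `g = d + h` turns
`|Σ q|² = Σ_{g,h} q g * conj (q h)` into `Σ_d q d * conj (Σ_h B(d, h))`. Each `B(d, ·)` is a
character of `G`, trivial only for `d = 0`, so by orthogonality of characters only `d = 0`
contributes, with value `q 0 * |G| = |G|`.
-/

open ComplexConjugate

section

variable {G : Type*} [AddCommGroup G]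

section Polarization

variable {M : Type*} [CommGroup M] (q : G → M)

def polarization (g h : G) : M := q g * q h * (q (g + h))⁻¹

lemma polarization_comm (g h : G) : polarization q g h = polarization q h g := by
  rw [polarization, polarization, mul_comm (q g), add_comm]

lemma map_add_mul_inv_eq_mul_polarization_inv (g h : G) :
    q (g + h) * (q h)⁻¹ = q g * (polarization q g h)⁻¹ := by
  rw [polarization, mul_inv_rev, inv_inv, mul_inv_rev, mul_left_comm,
    mul_comm (q h)⁻¹, mul_inv_cancel_left]

variable {q}
variable (hbi : ∀ g h k : G,
  polarization q (g + h) k = polarization q g k * polarization q h k)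
include hbi

lemma map_zero_eq_one_of_polarization_add_left : q 0 = 1 := by
  have h := hbi 0 0 0
  simp only [add_zero, left_eq_mul, polarization] at h
  simpa using h

lemma polarization_add_right (d h k : G) :
    polarization q d (h + k) = polarization q d h * polarization q d k := by
  rw [polarization_comm q d, polarization_comm q d, polarization_comm q d, hbi]

def polarizationChar (d : G) : AddChar G M where
  toFun := polarization q d
  map_zero_eq_one' := by simp [polarization, map_zero_eq_one_of_polarization_add_left hbi]
  map_add_eq_mul' := polarization_add_right hbi d

end Polarization

variable [Fintype G]

lemma sum_polarization_eq_ite [DecidableEq G] {q : G → Circle}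
    (hbi : ∀ g h k : G,
      polarization q (g + h) k = polarization q g k * polarization q h k)
    (hnd : ∀ g : G, (∀ h, polarization q g h = 1) → g = 0) (d : G) :
    ∑ h, ((polarization q d h : Circle) : ℂ) = if d = 0 then (Fintype.card G : ℂ) else 0 := by
  classical
  have htriv : Circle.coeHom.compAddChar (polarizationChar hbi d) = 0 ↔ d = 0 := by
    rw [AddChar.eq_zero_iff]
    refine ⟨fun h => hnd d fun k => Circle.coe_eq_one.mp (h k), ?_⟩
    rintro rfl k
    exact Circle.coe_eq_one.mpr
      ((polarization_comm q 0 k).trans (polarizationChar hbi k).map_zero_eq_one)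
  exact (AddChar.sum_eq_ite _).trans (if_congr htriv rfl rfl)

lemma sum_mul_conj_sum_eq_sum_mul_conj_sum_polarization (q : G → Circle) :
    (∑ g, (q g : ℂ)) * conj (∑ g, (q g : ℂ)) =
      ∑ d, (q d : ℂ) * conj (∑ h, ((polarization q d h : Circle) : ℂ)) := by
  rw [map_sum, Finset.sum_mul_sum, Finset.sum_comm]
  simp only [map_sum, Finset.mul_sum]
  conv_rhs => rw [Finset.sum_comm]
  refine Finset.sum_congr rfl fun h _ => (Fintype.sum_equiv (Equiv.addRight h) _ _ fun d => ?_).symm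
  have := congrArg ((↑) : Circle → ℂ) (map_add_mul_inv_eq_mul_polarization_inv q d h)
  rw [Circle.coe_mul, Circle.coe_mul, Circle.coe_inv_eq_conj, Circle.coe_inv_eq_conj] at this
  exact this.symm

end

theorem stmt11_general {G : Type*} [AddCommGroup G] [Fintype G]
    (q : G → Circle)
    (hbi : ∀ g h k : G,
      q (g + h) * q k * (q (g + h + k))⁻¹ =
        (q g * q k * (q (g + k))⁻¹) * (q h * q k * (q (h + k))⁻¹))
    (hnd : ∀ g : G, (∀ h, q g * q h * (q (g + h))⁻¹ = 1) → g = 0) :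
    ‖∑ g : G, (q g : ℂ)‖ ^ 2 = Fintype.card G := by
  classical
  have hq0 : q 0 = 1 := map_zero_eq_one_of_polarization_add_left hbi
  have hsum : (∑ g, (q g : ℂ)) * conj (∑ g, (q g : ℂ)) = Fintype.card G := by
    rw [sum_mul_conj_sum_eq_sum_mul_conj_sum_polarization]
    simp [sum_polarization_eq_ite hbi hnd, apply_ite (starRingEnd ℂ), hq0]
  rw [Complex.mul_conj] at hsum
  rw [Complex.sq_norm]
  exact_mod_cast hsum

/-- The Gauss sum of a non-degenerate quadratic form `q` on a finite
abelian group `G` has absolute value `√|G|`: `|Σ_{g∈G} q(g)|² = |G|`. -/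
theorem stmt11 {G : Type*} [AddCommGroup G] [Fintype G]
    (q : G → Circle)
    (hq : ∀ (n : ℤ) (g : G), q (n • g) = q g ^ (n ^ 2))
    (hbi : ∀ g h k : G,
      q (g + h) * q k * (q (g + h + k))⁻¹ =
        (q g * q k * (q (g + k))⁻¹) * (q h * q k * (q (h + k))⁻¹))
    (hnd : ∀ g : G, (∀ h, q g * q h * (q (g + h))⁻¹ = 1) → g = 0) :
    ‖∑ g : G, (q g : ℂ)‖ ^ 2 = Fintype.card G :=
  stmt11_general q hbi hnd
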